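/- Let $\Sigma, \widehat{\Sigma}$ be symmetric positive semidefinite $d\times d$ real matrices with $2\|\widehat{\Sigma} - \Sigma\|_\infty \leq \bar\lambda$, and suppose $\lambda \in (\bar\lambda, s]$ where $s$ is the smallest non-zero eigenvalue of $\Sigma$. Let $\widehat{\Sigma}^\lambda$ be obtained from $\widehat{\Sigma}$ by soft-thresholding its eigenvalues at level $\lambda/2$. Then $\mathrm{rank}(\widehat{\Sigma}^\lambda) = \mathrm{rank}(\Sigma)$. -/

import Mathlib

open Matrix MeasureTheory Finset

/-- Singular values of a real matrix (as square roots of the eigenvalues of `Aᴴ * A`),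
indexed by columns; not necessarily sorted. -/
noncomputable def sval {m q : ℕ} (A : Matrix (Fin m) (Fin q) ℝ) (k : Fin q) : ℝ :=
  Real.sqrt ((Matrix.isHermitian_conjTranspose_mul_self A).eigenvalues k)

/-- Nuclear (Schatten-1) norm: sum of singular values. -/
noncomputable def nucNorm {m q : ℕ} (A : Matrix (Fin m) (Fin q) ℝ) : ℝ :=
  ∑ k, sval A k

/-- Frobenius (Schatten-2) norm. -/
noncomputable def frobNorm {m q : ℕ} (A : Matrix (Fin m) (Fin q) ℝ) : ℝ :=
  Real.sqrt (Matrix.trace (Aᴴ * A))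

/-- Spectral norm: largest singular value. -/
noncomputable def specNorm {m q : ℕ} (A : Matrix (Fin m) (Fin q) ℝ) : ℝ :=
  ⨆ k, sval A k

/-- `rankAt A ε`: number of singular values of `A` that are `≥ ε`. -/
noncomputable def rankAt {m q : ℕ} (A : Matrix (Fin m) (Fin q) ℝ) (ε : ℝ) : ℕ :=
  Nat.card {k : Fin q // ε ≤ sval A k}

/-- `svalOrd A k`: the `(k+1)`-th largest singular value of `A`. -/
noncomputable def svalOrd {m q : ℕ} (A : Matrix (Fin m) (Fin q) ℝ) (k : Fin q) : ℝ :=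
  sSup {t : ℝ | (k : ℕ) + 1 ≤ rankAt A t}

/-!
Both ranks count eigenvalues: `rank Σ̂^λ = #{k | s_k > λ/2}` for the eigenvalues `s_k` of `Σ̂`, and
`rank Σ = #{k | σ_k ≠ 0}` where every non-zero eigenvalue `σ_k` of `Σ` is at least `s`. The
quadratic forms of `Σ̂` and `Σ` differ by at most `(λ̄/2)‖x‖²`. On the span of the eigenvectors of
`Σ` with non-zero eigenvalue the form of `Σ̂` is therefore at least `(s - λ̄/2)‖x‖² > (λ/2)‖x‖²`,
and on the span of the eigenvectors of `Σ̂` with eigenvalue above `λ/2` the form of `Σ` is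
positive. By the min-max principle each count bounds the other.
-/

/-- Orthonormality for the dot product (`n → ℝ` carries the sup norm, so Mathlib's
`Orthonormal` does not apply). -/
def DotOrthonormal {n : Type*} [Fintype n] [DecidableEq n] (v : n → n → ℝ) : Prop :=
  ∀ i j, v i ⬝ᵥ v j = if i = j then 1 else 0

theorem dotProduct_self_nonneg {n : Type*} [Fintype n] (x : n → ℝ) : 0 ≤ x ⬝ᵥ x :=
  dotProduct_self_star_nonneg x

theorem dotProduct_self_pos {n : Type*} [Fintype n] {x : n → ℝ} (hx : x ≠ 0) : 0 < x ⬝ᵥ x :=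
  dotProduct_self_star_pos_iff.mpr hx

theorem sq_dotProduct_le {n : Type*} [Fintype n] (x y : n → ℝ) :
    (x ⬝ᵥ y) ^ 2 ≤ (x ⬝ᵥ x) * (y ⬝ᵥ y) := by
  simpa only [dotProduct, sq] using Finset.sum_mul_sq_le_sq_mul_sq Finset.univ x y

namespace DotOrthonormal

variable {n : Type*} [Fintype n] [DecidableEq n] {v : n → n → ℝ}

theorem sum_dotProduct_smul (hv : DotOrthonormal v) (x : n → ℝ) :
    ∑ k, (v k ⬝ᵥ x) • v k = x := by
  set U : Matrix n n ℝ := Matrix.of v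
  have hUUt : U * Uᵀ = 1 := by
    ext i j
    exact hv i j
  calc ∑ k, (v k ⬝ᵥ x) • v k = (x ᵥ* Uᵀ) ᵥ* U := by
        rw [vecMul_transpose, vecMul_eq_sum]; rfl
    _ = x := by rw [vecMul_vecMul, mul_eq_one_comm.mp hUUt, vecMul_one]

theorem sum_sq_dotProduct (hv : DotOrthonormal v) (x : n → ℝ) :
    ∑ k, (v k ⬝ᵥ x) ^ 2 = x ⬝ᵥ x := by
  calc ∑ k, (v k ⬝ᵥ x) ^ 2 = x ⬝ᵥ ∑ k, (v k ⬝ᵥ x) • v k := by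
        rw [dotProduct_sum]
        exact Finset.sum_congr rfl fun k _ => by
          rw [dotProduct_smul, smul_eq_mul, dotProduct_comm x, sq]
    _ = x ⬝ᵥ x := by rw [hv.sum_dotProduct_smul]

theorem dotProduct_sum_smul (hv : DotOrthonormal v) (a : n → ℝ) (j : n) :
    v j ⬝ᵥ ∑ k, a k • v k = a j := by
  simp [dotProduct_sum, dotProduct_smul, hv j]

theorem linearIndependent (hv : DotOrthonormal v) : LinearIndependent ℝ v := by
  rw [Fintype.linearIndependent_iff]
  intro a ha j
  simpa [ha] using (hv.dotProduct_sum_smul a j).symm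

theorem dotProduct_eq_zero_of_mem_span (hv : DotOrthonormal v) {S : Set n} {j : n} (hj : j ∉ S)
    {x : n → ℝ} (hx : x ∈ Submodule.span ℝ (v '' S)) : v j ⬝ᵥ x = 0 := by
  induction hx using Submodule.span_induction with
  | mem y hy =>
    obtain ⟨k, hk, rfl⟩ := hy
    simp [hv j k, show j ≠ k by rintro rfl; exact hj hk]
  | zero => simp
  | add y z _ _ hy hz => simp [dotProduct_add, hy, hz]
  | smul a y _ hy => simp [dotProduct_smul, hy]

theorem finrank_span_image (hv : DotOrthonormal v) (S : Finset n) :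
    Module.finrank ℝ (Submodule.span ℝ (v '' S)) = S.card := by
  rw [Set.image_eq_range]
  exact (finrank_span_eq_card (hv.linearIndependent.comp _ Subtype.val_injective)).trans
    (Fintype.card_coe S)

section Eigen

variable {A : Matrix n n ℝ} {c : n → ℝ}

theorem mulVec_eq_sum (hv : DotOrthonormal v) (hA : ∀ k, A *ᵥ v k = c k • v k) (x : n → ℝ) :
    A *ᵥ x = ∑ k, (c k * (v k ⬝ᵥ x)) • v k := by
  conv_lhs => rw [← hv.sum_dotProduct_smul x]
  simp only [mulVec_sum, mulVec_smul, hA, smul_smul, mul_comm]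

theorem dotProduct_mulVec_eq_sum (hv : DotOrthonormal v) (hA : ∀ k, A *ᵥ v k = c k • v k)
    (x : n → ℝ) : x ⬝ᵥ A *ᵥ x = ∑ k, c k * (v k ⬝ᵥ x) ^ 2 := by
  rw [hv.mulVec_eq_sum hA, dotProduct_sum]
  refine Finset.sum_congr rfl fun k _ => ?_
  rw [dotProduct_smul, smul_eq_mul, dotProduct_comm x]
  ring

theorem range_mulVecLin (hv : DotOrthonormal v) (hA : ∀ k, A *ᵥ v k = c k • v k) :
    LinearMap.range A.mulVecLin = Submodule.span ℝ (v '' {k | c k ≠ 0}) := by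
  apply le_antisymm
  · rintro _ ⟨x, rfl⟩
    rw [mulVecLin_apply, hv.mulVec_eq_sum hA]
    refine Submodule.sum_mem _ fun k _ => ?_
    by_cases hk : c k = 0
    · simp [hk]
    · exact Submodule.smul_mem _ _ (Submodule.subset_span ⟨k, hk, rfl⟩)
  · rw [Submodule.span_le]
    rintro _ ⟨k, hk, rfl⟩
    exact ⟨(c k)⁻¹ • v k, by
      rw [LinearMap.map_smul, mulVecLin_apply, hA, smul_smul, inv_mul_cancel₀ hk, one_smul]⟩

theorem rank_eq_card (hv : DotOrthonormal v) (hA : ∀ k, A *ᵥ v k = c k • v k) :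
    A.rank = #{k | c k ≠ 0} := by
  have hS : {k | c k ≠ 0} = ↑({k | c k ≠ 0} : Finset n) := by simp
  rw [Matrix.rank, hv.range_mulVecLin hA, hS, hv.finrank_span_image]

theorem le_dotProduct_mulVec_of_mem_span (hv : DotOrthonormal v)
    (hA : ∀ k, A *ᵥ v k = c k • v k) {S : Set n} {t : ℝ} (hS : ∀ k ∈ S, t ≤ c k) {x : n → ℝ}
    (hx : x ∈ Submodule.span ℝ (v '' S)) : t * (x ⬝ᵥ x) ≤ x ⬝ᵥ A *ᵥ x := by
  rw [hv.dotProduct_mulVec_eq_sum hA, ← hv.sum_sq_dotProduct, Finset.mul_sum]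
  refine Finset.sum_le_sum fun k _ => ?_
  by_cases hk : k ∈ S
  · exact mul_le_mul_of_nonneg_right (hS k hk) (sq_nonneg _)
  · simp [hv.dotProduct_eq_zero_of_mem_span hk hx]

theorem dotProduct_mulVec_le_of_mem_span (hv : DotOrthonormal v)
    (hA : ∀ k, A *ᵥ v k = c k • v k) {S : Set n} {t : ℝ} (hS : ∀ k ∈ S, c k ≤ t) {x : n → ℝ}
    (hx : x ∈ Submodule.span ℝ (v '' S)) : x ⬝ᵥ A *ᵥ x ≤ t * (x ⬝ᵥ x) := by
  have hneg : ∀ k, (-A) *ᵥ v k = (-c) k • v k := fun k => by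
    rw [neg_mulVec, hA, Pi.neg_apply, neg_smul]
  simpa [neg_mulVec] using
    hv.le_dotProduct_mulVec_of_mem_span hneg (t := -t) (fun k hk => neg_le_neg (hS k hk)) hx

/-- Half of the Courant–Fischer min-max principle. -/
theorem finrank_le_card_of_lt_dotProduct_mulVec (hv : DotOrthonormal v)
    (hA : ∀ k, A *ᵥ v k = c k • v k) {W : Submodule ℝ (n → ℝ)} {t : ℝ}
    (hW : ∀ x ∈ W, x ≠ 0 → t * (x ⬝ᵥ x) < x ⬝ᵥ A *ᵥ x) :
    Module.finrank ℝ W ≤ #{k | t < c k} := by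
  have hcard := Finset.card_filter_add_card_filter_not (s := Finset.univ) (fun k => t < c k)
  set S : Finset n := {k | ¬ t < c k}
  have hdisj : Disjoint W (Submodule.span ℝ (v '' S)) := by
    rw [Submodule.disjoint_def]
    intro x hxW hxS
    by_contra hx
    have hle := hv.dotProduct_mulVec_le_of_mem_span hA (t := t)
      (fun k hk => not_lt.mp (Finset.mem_filter.mp hk).2) hxS
    exact (hW x hxW hx).not_ge hle
  have hsum := Submodule.finrank_add_finrank_le_of_disjoint hdisj
  rw [hv.finrank_span_image, Module.finrank_pi, ← Finset.card_univ] at hsum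
  omega

end Eigen

/-- Eigenvalue counting form of Weyl's inequality. -/
theorem card_le_card_of_abs_sub_le {w : n → n → ℝ} {A B : Matrix n n ℝ} {a b : n → ℝ}
    (hv : DotOrthonormal v) (hA : ∀ k, A *ᵥ v k = a k • v k)
    (hw : DotOrthonormal w) (hB : ∀ k, B *ᵥ w k = b k • w k) {ε t t' : ℝ}
    (hAB : ∀ x, |x ⬝ᵥ B *ᵥ x - x ⬝ᵥ A *ᵥ x| ≤ ε * (x ⬝ᵥ x))
    {S : Finset n} (hS : ∀ k ∈ S, t ≤ a k) (ht : t' + ε < t) :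
    #S ≤ #{k | t' < b k} := by
  rw [← hv.finrank_span_image]
  refine hw.finrank_le_card_of_lt_dotProduct_mulVec hB fun x hx hx0 => ?_
  have hxx : 0 < x ⬝ᵥ x := dotProduct_self_pos hx0
  have hlow := hv.le_dotProduct_mulVec_of_mem_span hA hS hx
  have hpert := (abs_le.mp (hAB x)).1
  nlinarith

theorem sum_smul_vecMulVec_mulVec (hv : DotOrthonormal v) (c : n → ℝ) (j : n) :
    (∑ k, c k • vecMulVec (v k) (v k)) *ᵥ v j = c j • v j := by
  simp [sum_mulVec, smul_mulVec, vecMulVec_mulVec, hv _ j]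

end DotOrthonormal

theorem Matrix.IsHermitian.dotOrthonormal_eigenvectorBasis {n : Type*} [Fintype n]
    [DecidableEq n] {A : Matrix n n ℝ} (hA : A.IsHermitian) :
    DotOrthonormal fun k => ⇑(hA.eigenvectorBasis k) := fun i j => by
  simpa [PiLp.inner_apply, dotProduct, mul_comm] using
    orthonormal_iff_ite.mp hA.eigenvectorBasis.orthonormal i j

theorem Matrix.PosSemidef.mulVec_eq_smul_of_mul_self_mulVec_eq {n : Type*} [Fintype n]
    {A : Matrix n n ℝ} (hA : A.PosSemidef) {t : ℝ} (ht : 0 ≤ t) {x : n → ℝ}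
    (hx : (A * A) *ᵥ x = t ^ 2 • x) : A *ᵥ x = t • x := by
  rcases ht.eq_or_lt with rfl | ht
  · have hker : (Aᴴ * A) *ᵥ x = 0 := by rw [hA.1, hx]; simp
    simpa using (conjTranspose_mul_self_mulVec_eq_zero A x).mp hker
  · set y := A *ᵥ x - t • x
    -- `y` is an eigenvector of the positive semidefinite `A` for the negative eigenvalue `-t`
    have hAy : A *ᵥ y = -t • y := by
      simp only [y, mulVec_sub, mulVec_smul, mulVec_mulVec, hx]
      module
    have hform : 0 ≤ -t * (y ⬝ᵥ y) := by
      simpa [hAy, dotProduct_smul] using hA.dotProduct_mulVec_nonneg y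
    have hyy : y ⬝ᵥ y = 0 := le_antisymm (by nlinarith) (dotProduct_self_nonneg y)
    exact sub_eq_zero.mp (dotProduct_self_eq_zero.mp hyy)

theorem Matrix.PosSemidef.mulVec_eigenvectorBasis_eq_sval_smul {d : ℕ}
    {A : Matrix (Fin d) (Fin d) ℝ} (hA : A.PosSemidef) (k : Fin d) :
    A *ᵥ ⇑((isHermitian_conjTranspose_mul_self A).eigenvectorBasis k) =
      sval A k • ⇑((isHermitian_conjTranspose_mul_self A).eigenvectorBasis k) := by
  refine hA.mulVec_eq_smul_of_mul_self_mulVec_eq (Real.sqrt_nonneg _) ?_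
  rw [Real.sq_sqrt ((posSemidef_conjTranspose_mul_self A).eigenvalues_nonneg k),
    ← (isHermitian_conjTranspose_mul_self A).mulVec_eigenvectorBasis,
    show A * A = Aᴴ * A by rw [hA.1]]

theorem specNorm_nonneg {m q : ℕ} (E : Matrix (Fin m) (Fin q) ℝ) : 0 ≤ specNorm E :=
  Real.iSup_nonneg fun _ => Real.sqrt_nonneg _

theorem sval_le_specNorm {m q : ℕ} (E : Matrix (Fin m) (Fin q) ℝ) (k : Fin q) :
    sval E k ≤ specNorm E :=
  le_ciSup (Finite.bddAbove_range _) k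

theorem mulVec_dotProduct_mulVec_le_specNorm_sq {m q : ℕ} (E : Matrix (Fin m) (Fin q) ℝ)
    (x : Fin q → ℝ) : (E *ᵥ x) ⬝ᵥ (E *ᵥ x) ≤ specNorm E ^ 2 * (x ⬝ᵥ x) := by
  set hB := isHermitian_conjTranspose_mul_self E
  have heig : ∀ k, hB.eigenvalues k ≤ specNorm E ^ 2 := fun k => by
    rw [← Real.sq_sqrt ((posSemidef_conjTranspose_mul_self E).eigenvalues_nonneg k)]
    exact pow_le_pow_left₀ (Real.sqrt_nonneg _) (sval_le_specNorm E k) 2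
  calc (E *ᵥ x) ⬝ᵥ (E *ᵥ x) = x ⬝ᵥ (Eᴴ * E) *ᵥ x := by
        rw [← mulVec_mulVec, dotProduct_mulVec x, conjTranspose_eq_transpose_of_trivial,
          vecMul_transpose]
    _ = ∑ k, hB.eigenvalues k * (hB.eigenvectorBasis k ⬝ᵥ x) ^ 2 :=
        hB.dotOrthonormal_eigenvectorBasis.dotProduct_mulVec_eq_sum hB.mulVec_eigenvectorBasis x
    _ ≤ ∑ k, specNorm E ^ 2 * (hB.eigenvectorBasis k ⬝ᵥ x) ^ 2 :=
        Finset.sum_le_sum fun k _ => mul_le_mul_of_nonneg_right (heig k) (sq_nonneg _)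
    _ = specNorm E ^ 2 * (x ⬝ᵥ x) := by
        rw [← Finset.mul_sum, hB.dotOrthonormal_eigenvectorBasis.sum_sq_dotProduct]

theorem abs_dotProduct_mulVec_le_specNorm {d : ℕ} (E : Matrix (Fin d) (Fin d) ℝ)
    (x : Fin d → ℝ) : |x ⬝ᵥ E *ᵥ x| ≤ specNorm E * (x ⬝ᵥ x) := by
  refine abs_le_of_sq_le_sq ?_ (mul_nonneg (specNorm_nonneg E) (dotProduct_self_nonneg x))
  calc (x ⬝ᵥ E *ᵥ x) ^ 2 ≤ (x ⬝ᵥ x) * ((E *ᵥ x) ⬝ᵥ (E *ᵥ x)) := sq_dotProduct_le _ _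
    _ ≤ (x ⬝ᵥ x) * (specNorm E ^ 2 * (x ⬝ᵥ x)) :=
        mul_le_mul_of_nonneg_left (mulVec_dotProduct_mulVec_le_specNorm_sq E x)
          (dotProduct_self_nonneg x)
    _ = (specNorm E * (x ⬝ᵥ x)) ^ 2 := by ring

theorem rank_recovery_general {d : ℕ}
    (Sig Shat : Matrix (Fin d) (Fin d) ℝ)
    (hSig : Sig.PosSemidef)
    (sv : Fin d → ℝ) (u : Fin d → (Fin d → ℝ))
    (hu : ∀ i j, u i ⬝ᵥ u j = if i = j then (1 : ℝ) else 0)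
    (hShat : Shat = ∑ k, sv k • Matrix.vecMulVec (u k) (u k))
    (lbar lam s : ℝ)
    (hclose : 2 * specNorm (Shat - Sig) ≤ lbar)
    (hsmin : ∀ k, sval Sig k ≠ 0 → s ≤ sval Sig k)
    (hlam : lbar < lam) (hlam2 : lam ≤ s)
    (Slam : Matrix (Fin d) (Fin d) ℝ)
    (hSlam : Slam = ∑ k, max (sv k - lam / 2) 0 • Matrix.vecMulVec (u k) (u k)) :
    Slam.rank = Sig.rank := by
  have hu : DotOrthonormal u := hu
  have hb := (isHermitian_conjTranspose_mul_self Sig).dotOrthonormal_eigenvectorBasis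
  have hSig_eig := hSig.mulVec_eigenvectorBasis_eq_sval_smul
  have hShat_eig := hShat ▸ hu.sum_smul_vecMulVec_mulVec sv
  have hSlam_eig := hSlam ▸ hu.sum_smul_vecMulVec_mulVec fun k => max (sv k - lam / 2) 0
  have hpert (x : Fin d → ℝ) : |x ⬝ᵥ Shat *ᵥ x - x ⬝ᵥ Sig *ᵥ x| ≤ lbar / 2 * (x ⬝ᵥ x) := by
    rw [← dotProduct_sub, ← sub_mulVec]
    exact (abs_dotProduct_mulVec_le_specNorm _ x).trans
      (mul_le_mul_of_nonneg_right (by linarith) (dotProduct_self_nonneg x))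
  have hthresh (k : Fin d) : max (sv k - lam / 2) 0 ≠ 0 ↔ lam / 2 < sv k := by
    rw [ne_eq, max_eq_right_iff, not_le, sub_pos]
  rw [hu.rank_eq_card hSlam_eig, hb.rank_eq_card hSig_eig]
  simp only [hthresh]
  refine le_antisymm ?_ ?_
  · calc #{k | lam / 2 < sv k} ≤ #{k | 0 < sval Sig k} :=
          hu.card_le_card_of_abs_sub_le hShat_eig hb hSig_eig
            (fun x => abs_sub_comm (x ⬝ᵥ Sig *ᵥ x) _ ▸ hpert x)
            (fun k hk => (Finset.mem_filter.mp hk).2.le) (by linarith)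
      _ ≤ #{k | sval Sig k ≠ 0} := Finset.card_le_card <|
          Finset.monotone_filter_right _ fun _ _ => LT.lt.ne'
  · exact hb.card_le_card_of_abs_sub_le hSig_eig hu hShat_eig hpert
      (fun k hk => hsmin k (Finset.mem_filter.mp hk).2) (by linarith)

/-- If the shrinkage level lies between the estimation error and the smallest
non-zero eigenvalue, the soft-thresholded estimator recovers the rank exactly. -/
theorem rank_recovery {d : ℕ}
    (Sig Shat : Matrix (Fin d) (Fin d) ℝ)
    (hSig : Sig.PosSemidef) (hShatP : Shat.PosSemidef)
    (sv : Fin d → ℝ) (u : Fin d → (Fin d → ℝ)) (hsv : ∀ k, 0 ≤ sv k)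
    (hu : ∀ i j, u i ⬝ᵥ u j = if i = j then (1 : ℝ) else 0)
    (hShat : Shat = ∑ k, sv k • Matrix.vecMulVec (u k) (u k))
    (lbar lam s : ℝ)
    (hclose : 2 * specNorm (Shat - Sig) ≤ lbar)
    (hspos : 0 < s) (hsmem : ∃ k, sval Sig k = s)
    (hsmin : ∀ k, sval Sig k ≠ 0 → s ≤ sval Sig k)
    (hlam : lbar < lam) (hlam2 : lam ≤ s)
    (Slam : Matrix (Fin d) (Fin d) ℝ)
    (hSlam : Slam = ∑ k, max (sv k - lam / 2) 0 • Matrix.vecMulVec (u k) (u k)) :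
    Slam.rank = Sig.rank :=
  rank_recovery_general Sig Shat hSig sv u hu hShat lbar lam s hclose hsmin hlam hlam2 Slam hSlam
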